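/- Let K max-affine spline units on R^D have slopes A_k : Fin R → R^D and offsets B_k : Fin R → ℝ for k = 1,…,K. For a joint index vector r ∈ (Fin R)^K, define μ_r = Σ_k A_k (r k) and rad_r = 2 Σ_k B_k (r k) + ‖μ_r‖². Then x lies in the joint cell (each unit k attains its max at r k) if and only if Σ_k (⟨A_k (r k), x⟩ + B_k (r k)) ≥ Σ_k (⟨A_k (s k), x⟩ + B_k (s k)) for all s ∈ (Fin R)^K with equality of per-unit maxima, and the joint cell is contained in the power-diagram cell {x : ∀ s, ‖x − μ_r‖² − rad_r ≤ ‖x − μ_s‖² − rad_s}. -/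

import Mathlib

/-!
A sum of functions of separate variables is maximised exactly when every summand is, which gives
the first part. For the second, expanding the square shows that the Laguerre distance
`‖x - μ r‖² - rad r` equals `‖x‖² - 2 ∑ₖ (⟪A k (r k), x⟫ + B k (r k))`, so minimising it over `r`
is the same as maximising the joint affine output.
-/

open RealInnerProductSpace

theorem forall_le_iff_forall_sum_le_sum {ι α M : Type*} [Fintype ι]
    [AddCommMonoid M] [PartialOrder M] [IsOrderedCancelAddMonoid M]
    (f : ι → α → M) (r : ι → α) :
    (∀ k s, f k s ≤ f k (r k)) ↔ ∀ s : ι → α, ∑ k, f k (s k) ≤ ∑ k, f k (r k) := by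
  classical
  refine ⟨fun h s => Finset.sum_le_sum fun k _ => h k (s k), fun h k j => ?_⟩
  have hupdate := h (Function.update r k j)
  simp only [Function.apply_update f r k j] at hupdate
  rwa [Finset.sum_update_of_mem (Finset.mem_univ k), ← Finset.add_sum_erase _ _ (Finset.mem_univ k),
    ← Finset.sdiff_singleton_eq_erase, add_le_add_iff_right] at hupdate

theorem norm_sub_sq_sub_two_mul_add_norm_sq {F : Type*} [NormedAddCommGroup F]
    [InnerProductSpace ℝ F] (x μ : F) (b : ℝ) :
    ‖x - μ‖ ^ 2 - (2 * b + ‖μ‖ ^ 2) = ‖x‖ ^ 2 - 2 * (⟪μ, x⟫ + b) := by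
  rw [norm_sub_sq_real, real_inner_comm]
  ring

theorem maso_joint_cell_characterization {D R K : ℕ}
    (A : Fin K → Fin R → EuclideanSpace ℝ (Fin D)) (B : Fin K → Fin R → ℝ)
    (μ : (Fin K → Fin R) → EuclideanSpace ℝ (Fin D)) (rad : (Fin K → Fin R) → ℝ)
    (hμ : ∀ r, μ r = ∑ k, A k (r k))
    (hrad : ∀ r, rad r = 2 * (∑ k, B k (r k)) + ‖μ r‖ ^ 2)
    (r : Fin K → Fin R) :
    (∀ x : EuclideanSpace ℝ (Fin D),
      (∀ k s, ⟪A k (r k), x⟫ + B k (r k) ≥ ⟪A k s, x⟫ + B k s) ↔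
        (∀ s : Fin K → Fin R,
          ∑ k, (⟪A k (r k), x⟫ + B k (r k)) ≥ ∑ k, (⟪A k (s k), x⟫ + B k (s k)))) ∧
    {x : EuclideanSpace ℝ (Fin D) |
        ∀ k s, ⟪A k (r k), x⟫ + B k (r k) ≥ ⟪A k s, x⟫ + B k s} ⊆
      {x : EuclideanSpace ℝ (Fin D) |
        ∀ s : Fin K → Fin R, ‖x - μ r‖ ^ 2 - rad r ≤ ‖x - μ s‖ ^ 2 - rad s} := by
  have cell_iff x := forall_le_iff_forall_sum_le_sum (fun k s => ⟪A k s, x⟫ + B k s) r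
  refine ⟨cell_iff, fun x hx s => ?_⟩
  have laguerre t :
      ‖x - μ t‖ ^ 2 - rad t = ‖x‖ ^ 2 - 2 * ∑ k, (⟪A k (t k), x⟫ + B k (t k)) := by
    rw [hrad, norm_sub_sq_sub_two_mul_add_norm_sq, hμ, sum_inner, Finset.sum_add_distrib]
  rw [laguerre, laguerre]
  linarith [(cell_iff x).1 hx s]
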